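/- arXiv:1304.5801 — 3 statements merged into one kernel-verified Lean document; each statement's English description precedes it below -/
import Mathlib

section
/- Let b : [0,T] → ℝ^n be differentiable and satisfy b'(t) = c·v(t) − d·|v(t)|·b(t) pointwise, where v : [0,T] → ℝ^n is continuous, c, d > 0. If |b(0)| ≤ c/d, then |b(t)| ≤ c/d for all t ∈ [0,T]. -/
open Set

/-- Lemma 4.2 (pointwise in x): the Armstrong–Frederick recall term keeps the
backstress bounded by c/d. -/
theorem backstress_bound {n : ℕ} (T c d : ℝ) (hT : 0 ≤ T) (hc : 0 < c) (hd : 0 < d)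
    (b v : ℝ → EuclideanSpace ℝ (Fin n)) (hv : ContinuousOn v (Icc 0 T))
    (hb : ∀ t ∈ Icc 0 T, HasDerivAt b (c • v t - (d * ‖v t‖) • b t) t)
    (hb0 : ‖b 0‖ ≤ c / d) :
    ∀ t ∈ Icc 0 T, ‖b t‖ ≤ c / d := by
  have hcd : 0 < c / d := div_pos hc hd
  have hbc : ContinuousOn b (Icc 0 T) := fun t ht =>
    (hb t ht).continuousAt.continuousWithinAt
  -- key estimate with perturbed barrier
  have key : ∀ ε > 0, ∀ t ∈ Icc 0 T, ‖b t‖ ^ 2 ≤ (c / d) ^ 2 + ε * Real.exp t := by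
    intro ε hε
    have := image_le_of_deriv_right_lt_deriv_boundary'
      (f := fun t => ‖b t‖ ^ 2)
      (f' := fun t => (inner ℝ (b t) (c • v t - (d * ‖v t‖) • b t) : ℝ) +
        inner ℝ (c • v t - (d * ‖v t‖) • b t) (b t))
      (a := 0) (b := T)
      (B := fun t => (c / d) ^ 2 + ε * Real.exp t)
      (B' := fun t => ε * Real.exp t)
      ?_ ?_ ?_ ?_ ?_ ?_
    · exact this
    · exact (hbc.norm.pow 2)
    · intro x hx
      have hx' : x ∈ Icc 0 T := ⟨hx.1, le_of_lt hx.2⟩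
      have h1 : HasDerivWithinAt (fun t => (inner ℝ (b t) (b t) : ℝ))
          ((inner ℝ (b x) (c • v x - (d * ‖v x‖) • b x) : ℝ) +
            inner ℝ (c • v x - (d * ‖v x‖) • b x) (b x)) (Ici x) x :=
        (hb x hx').hasDerivWithinAt.inner ℝ (hb x hx').hasDerivWithinAt
      have : (fun t => (inner ℝ (b t) (b t) : ℝ)) = fun t => ‖b t‖ ^ 2 := by
        funext t; rw [real_inner_self_eq_norm_sq]
      rwa [this] at h1
    · simp only [Real.exp_zero, mul_one]
      have : ‖b 0‖ ^ 2 ≤ (c / d) ^ 2 :=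
        pow_le_pow_left₀ (norm_nonneg _) hb0 2
      linarith
    · exact (continuousOn_const.add (continuousOn_const.mul Real.continuousOn_exp))
    · intro x _
      exact ((Real.hasDerivAt_exp x).const_mul ε).const_add _ |>.hasDerivWithinAt
    · intro x hx hfB
      have hx' : x ∈ Icc 0 T := ⟨hx.1, le_of_lt hx.2⟩
      -- on the boundary, ‖b x‖ > c/d
      have hgt : c / d < ‖b x‖ := by
        have h2 : (c / d) ^ 2 < ‖b x‖ ^ 2 := by
          rw [hfB]; nlinarith [Real.exp_pos x]
        exact lt_of_pow_lt_pow_left₀ 2 (norm_nonneg _) h2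
      have hvb : (inner ℝ (v x) (b x) : ℝ) ≤ ‖v x‖ * ‖b x‖ := real_inner_le_norm _ _
      have hbb : (inner ℝ (b x) (b x) : ℝ) = ‖b x‖ ^ 2 := real_inner_self_eq_norm_sq _
      have hexp : 0 < ε * Real.exp x := mul_pos hε (Real.exp_pos x)
      have hsymm : (inner ℝ (b x) (c • v x - (d * ‖v x‖) • b x) : ℝ) =
          inner ℝ (c • v x - (d * ‖v x‖) • b x) (b x) := real_inner_comm _ _
      rw [hsymm]
      have hexpand : (inner ℝ (c • v x - (d * ‖v x‖) • b x) (b x) : ℝ) =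
          c * inner ℝ (v x) (b x) - (d * ‖v x‖) * inner ℝ (b x) (b x) := by
        rw [inner_sub_left, real_inner_smul_left, real_inner_smul_left]
      have hle : (inner ℝ (c • v x - (d * ‖v x‖) • b x) (b x) : ℝ) ≤ 0 := by
        rw [hexpand, hbb]
        have h1 : c * (inner ℝ (v x) (b x) : ℝ) ≤ c * (‖v x‖ * ‖b x‖) :=
          mul_le_mul_of_nonneg_left hvb hc.le
        have h2 : c * (‖v x‖ * ‖b x‖) ≤ d * ‖v x‖ * ‖b x‖ ^ 2 := by
          have hcb : c ≤ d * ‖b x‖ := by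
            rw [div_lt_iff₀ hd] at hgt; nlinarith
          nlinarith [norm_nonneg (v x), norm_nonneg (b x), mul_nonneg (norm_nonneg (v x)) (norm_nonneg (b x))]
        linarith
      linarith
  -- pass to the limit ε → 0
  intro t ht
  have hsq : ‖b t‖ ^ 2 ≤ (c / d) ^ 2 := by
    refine le_of_forall_pos_le_add fun ε hε => ?_
    have hε' : 0 < ε / Real.exp t := div_pos hε (Real.exp_pos t)
    have := key (ε / Real.exp t) hε' t ht
    rwa [div_mul_cancel₀ _ (Real.exp_ne_zero t)] at this
  exact le_of_pow_le_pow_left₀ two_ne_zero hcd.le hsq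
end

section
/- Let Π be the metric projection of ℝ^n onto the closed ball {b : |b| ≤ c/d}, i.e. Π(b) = b if |b| ≤ c/d and Π(b) = (c/d)·b/|b| otherwise. If b : [0,T] → ℝ^n is differentiable, satisfies b'(t) = c·v(t) − d·|v(t)|·Π(b(t)) with v continuous and c, d > 0, and |b(0)| ≤ c/d, then |b(t)| ≤ c/d for all t, and consequently Π(b(t)) = b(t) for all t ∈ [0,T]. -/
open Set

noncomputable def proj {n : ℕ} (r : ℝ) (b : EuclideanSpace ℝ (Fin n)) :
    EuclideanSpace ℝ (Fin n) :=
  if ‖b‖ ≤ r then b else (r / ‖b‖) • b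

/-- Lemma 4.3: solutions of the projected backstress equation stay in the ball of
radius c/d, so the projection acts as the identity on them. -/
theorem backstress_proj_identity {n : ℕ} (T c d : ℝ) (hT : 0 ≤ T) (hc : 0 < c) (hd : 0 < d)
    (b v : ℝ → EuclideanSpace ℝ (Fin n)) (hv : ContinuousOn v (Icc 0 T))
    (hb : ∀ t ∈ Icc 0 T, HasDerivAt b (c • v t - (d * ‖v t‖) • proj (c / d) (b t)) t)
    (hb0 : ‖b 0‖ ≤ c / d) :
    ∀ t ∈ Icc 0 T, ‖b t‖ ≤ c / d ∧ proj (c / d) (b t) = b t := by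
  set r : ℝ := c / d with hr
  have hr0 : 0 < r := div_pos hc hd
  set f : ℝ → ℝ := fun t => inner ℝ (b t) (b t) with hf
  have hfnorm : ∀ t, f t = ‖b t‖ ^ 2 := fun t => real_inner_self_eq_norm_sq (b t)
  set f' : ℝ → ℝ := fun t =>
    inner ℝ (b t) (c • v t - (d * ‖v t‖) • proj r (b t))
      + inner ℝ (c • v t - (d * ‖v t‖) • proj r (b t)) (b t) with hf'
  have hfderiv : ∀ t ∈ Icc 0 T, HasDerivAt f (f' t) t := fun t ht =>
    (hb t ht).inner ℝ (hb t ht)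
  have hfcont : ContinuousOn f (Icc 0 T) := fun t ht =>
    (hfderiv t ht).continuousAt.continuousWithinAt
  -- key a-priori bound: for every ε > 0, f t ≤ r^2 + ε * exp t on [0,T]
  have key : ∀ ε > 0, ∀ t ∈ Icc (0:ℝ) T, f t ≤ r ^ 2 + ε * Real.exp t := by
    intro ε hε
    have H := image_le_of_deriv_right_lt_deriv_boundary (f := f) (f' := f')
      (B := fun x => r ^ 2 + ε * Real.exp x) (B' := fun x => ε * Real.exp x)
      hfcont
      (fun x hx => ((hfderiv x (Ico_subset_Icc_self hx)).hasDerivWithinAt))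
      (by
        show f 0 ≤ r ^ 2 + ε * Real.exp 0
        have h1 : f 0 ≤ r ^ 2 := by
          rw [hfnorm]
          have h0 : (0:ℝ) ≤ ‖b 0‖ := norm_nonneg _
          nlinarith
        have h2 : (0:ℝ) < ε * Real.exp 0 := by positivity
        linarith)
      (fun x => ((Real.hasDerivAt_exp x).const_mul ε).const_add _)
      ?_
    · exact fun t ht => H ht
    · intro x hx hfx
      have hfx' : f x = r ^ 2 + ε * Real.exp x := hfx
      show f' x < ε * Real.exp x
      have hxI : x ∈ Icc 0 T := Ico_subset_Icc_self hx
      have hbig : r < ‖b x‖ := by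
        have h1 : r ^ 2 < ‖b x‖ ^ 2 := by
          rw [← hfnorm, hfx']
          have : (0:ℝ) < ε * Real.exp x := by positivity
          linarith
        nlinarith [norm_nonneg (b x)]
      have hproj : proj r (b x) = (r / ‖b x‖) • b x := by
        rw [proj, if_neg (not_le.mpr hbig)]
      have hip : inner ℝ (c • v x - (d * ‖v x‖) • proj r (b x)) (b x) ≤ (0:ℝ) := by
        rw [hproj]
        have hbne : ‖b x‖ ≠ 0 := ne_of_gt (hr0.trans hbig)
        have h1 : inner ℝ ((r / ‖b x‖) • b x) (b x) = r * ‖b x‖ := by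
          rw [real_inner_smul_left, real_inner_self_eq_norm_sq]
          field_simp
        rw [inner_sub_left, real_inner_smul_left, real_inner_smul_left, h1]
        have h2 : inner ℝ (v x) (b x) ≤ ‖v x‖ * ‖b x‖ := real_inner_le_norm _ _
        have h3 : d * r = c := by rw [hr]; field_simp
        have h4 : c * inner ℝ (v x) (b x) ≤ d * ‖v x‖ * (r * ‖b x‖) :=
          calc c * inner ℝ (v x) (b x) ≤ c * (‖v x‖ * ‖b x‖) :=
                mul_le_mul_of_nonneg_left h2 hc.le
            _ = d * ‖v x‖ * (r * ‖b x‖) := by rw [← h3]; ring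
        linarith
      have hip2 : inner ℝ (b x) (c • v x - (d * ‖v x‖) • proj r (b x)) ≤ (0:ℝ) := by
        rw [real_inner_comm]; exact hip
      have hbound : f' x ≤ 0 := add_nonpos hip2 hip
      have hpos : (0:ℝ) < ε * Real.exp x := by positivity
      linarith
  intro t ht
  have hle : ‖b t‖ ≤ r := by
    have hsq : f t ≤ r ^ 2 := by
      refine le_of_forall_pos_le_add fun δ hδ => ?_
      have hεpos : 0 < δ / Real.exp T := by positivity
      have h1 := key (δ / Real.exp T) hεpos t ht
      have h2 : δ / Real.exp T * Real.exp t ≤ δ := by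
        rw [div_mul_eq_mul_div, div_le_iff₀ (Real.exp_pos T)]
        have := Real.exp_le_exp.mpr ht.2
        nlinarith [Real.exp_pos t]
      linarith
    rw [hfnorm] at hsq
    nlinarith [norm_nonneg (b t)]
  exact ⟨hle, by rw [proj, if_pos hle]⟩
end

section
/- Let E : [0,T] → [0,∞) be continuous and satisfy E(t) ≤ K·∫₀ᵗ E(τ) dτ + M·√E(t) + N for all t, with K, M, N ≥ 0. Then E is bounded on [0,T] by a constant depending only on K, M, N, T. -/
open Set intervalIntegral

lemma gronwallBound_mono_x {k e x y : ℝ} (hk : 0 ≤ k) (he : 0 ≤ e) (hx : 0 ≤ x)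
    (hxy : x ≤ y) : gronwallBound 0 k e x ≤ gronwallBound 0 k e y := by
  by_cases h : k = 0
  · subst h
    simp only [gronwallBound_K0]
    nlinarith
  · have hk' : 0 < k := lt_of_le_of_ne hk (Ne.symm h)
    rw [gronwallBound_of_K_ne_0 h]
    simp only [zero_mul, zero_add]
    have : Real.exp (k * x) ≤ Real.exp (k * y) := by
      apply Real.exp_le_exp.2; nlinarith
    have hek : 0 ≤ e / k := div_nonneg he hk
    nlinarith

/-- Nonlinear Gronwall-type boundedness (4.12)–(4.13): the bound depends only on
K, M, N, T, uniformly over all admissible E. -/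
theorem sqrt_gronwall_bounded (K M N T : ℝ) (hK : 0 ≤ K) (hM : 0 ≤ M) (hN : 0 ≤ N)
    (hT : 0 ≤ T) :
    ∃ B : ℝ, ∀ E : ℝ → ℝ, ContinuousOn E (Icc 0 T) → (∀ t ∈ Icc 0 T, 0 ≤ E t) →
      (∀ t ∈ Icc 0 T, E t ≤ K * ∫ τ in (0:ℝ)..t, E τ + M * Real.sqrt (E t) + N) →
      ∀ t ∈ Icc 0 T, E t ≤ B := by
  set C : ℝ := (K * T * M) ^ 2 + 2 * K * T * N with hCdef
  have hCnn : 0 ≤ C := by positivity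
  refine ⟨2 * K * gronwallBound 0 (2 * K) C T + C, ?_⟩
  intro E hEc hEnn hEle t ht
  have hint : ∀ b ∈ Icc (0:ℝ) T, IntervalIntegrable E MeasureTheory.volume 0 b := by
    intro b hb
    refine (hEc.mono ?_).intervalIntegrable
    rw [uIcc_of_le hb.1]
    exact Icc_subset_Icc le_rfl hb.2
  set F : ℝ → ℝ := fun u => ∫ τ in (0:ℝ)..u, E τ with hFdef
  have hFnn : ∀ b ∈ Icc (0:ℝ) T, 0 ≤ F b := by
    intro b hb
    exact intervalIntegral.integral_nonneg hb.1 (fun x hx => hEnn x ⟨hx.1, hx.2.trans hb.2⟩)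
  have key : ∀ b ∈ Icc (0:ℝ) T, E b ≤ 2 * K * F b + C := by
    intro b hb
    have h1 := hEle b hb
    rw [intervalIntegral.integral_add ((hint b hb).add intervalIntegrable_const)
        intervalIntegrable_const,
      intervalIntegral.integral_add (hint b hb) intervalIntegrable_const,
      intervalIntegral.integral_const, intervalIntegral.integral_const] at h1
    simp only [smul_eq_mul, sub_zero] at h1
    set s : ℝ := Real.sqrt (E b) with hs
    have hsnn : 0 ≤ s := Real.sqrt_nonneg _
    have hs2 : s ^ 2 = E b := Real.sq_sqrt (hEnn b hb)
    have hb0 : 0 ≤ b := hb.1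
    have hbT : b ≤ T := hb.2
    have hFb : 0 ≤ F b := hFnn b hb
    rw [hCdef]
    nlinarith [sq_nonneg (K * T * M - s), mul_nonneg (mul_nonneg (mul_nonneg hK (sub_nonneg.2 hbT)) hM) hsnn, mul_nonneg (mul_nonneg hK (sub_nonneg.2 hbT)) hN, mul_nonneg hK hFb]
  have grw : ∀ x ∈ Icc (0:ℝ) T, ‖F x‖ ≤ gronwallBound 0 (2 * K) C (x - 0) := by
    apply norm_le_gronwallBound_of_norm_deriv_right_le (f' := E)
    · have hco : ContinuousOn F (uIcc 0 T) :=
        continuousOn_primitive_interval (by rw [uIcc_of_le hT]; exact hEc.integrableOn_Icc)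
      rwa [uIcc_of_le hT] at hco
    · intro x hx
      have hmem : Icc (0:ℝ) T ∈ nhdsWithin x (Ioi x) :=
        Filter.mem_of_superset (Ioc_mem_nhdsGT_of_mem ⟨le_rfl, hx.2⟩)
          (fun y hy => ⟨hx.1.trans hy.1.le, hy.2⟩)
      have hmeas : StronglyMeasurableAtFilter E (nhdsWithin x (Ioi x)) MeasureTheory.volume :=
        ⟨Icc 0 T, hmem, hEc.aestronglyMeasurable measurableSet_Icc⟩
      have hcont : ContinuousWithinAt E (Ioi x) x :=
        (hEc x ⟨hx.1, hx.2.le⟩).mono_of_mem_nhdsWithin hmem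
      exact intervalIntegral.integral_hasDerivWithinAt_right (hint x ⟨hx.1, hx.2.le⟩) hmeas hcont
    · simp [hFdef]
    · intro x hx
      have hx' : x ∈ Icc (0:ℝ) T := ⟨hx.1, hx.2.le⟩
      rw [Real.norm_of_nonneg (hEnn x hx'), Real.norm_of_nonneg (hFnn x hx')]
      exact key x hx'
  have grwt := grw t ht
  rw [Real.norm_of_nonneg (hFnn t ht), sub_zero] at grwt
  have h2 := key t ht
  have h3 : gronwallBound 0 (2 * K) C t ≤ gronwallBound 0 (2 * K) C T :=
    gronwallBound_mono_x (by positivity) hCnn ht.1 ht.2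
  have h4 : 2 * K * F t ≤ 2 * K * gronwallBound 0 (2 * K) C T :=
    mul_le_mul_of_nonneg_left (grwt.trans h3) (by positivity)
  linarith
end
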